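/- Let G be a finite simple graph, k a positive integer, and L ⊆ V(G) a set of vertices with |L| ≥ 2k+1. Then there exists a set L′ with L ⊆ L′ ⊆ V(G) such that |L′ ∖ L| ≤ (|L| − 2k − 1)·k and, for each connected component D of G − L′, it holds that |N_G(D)| ≤ |L| and N_G(D) is (2k,k)-unbreakable in G. -/

import Mathlib

open SimpleGraph

variable {V : Type*}

/-- The open neighbourhood `N_G(C)` of a vertex set `C`:
vertices outside `C` with a neighbour in `C`. -/
def setNbhd (G : SimpleGraph V) (C : Set V) : Set V :=
  {v | v ∉ C ∧ ∃ u ∈ C, G.Adj u v}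

/-- The closed neighbourhood `N_G[C] = C ∪ N_G(C)`. -/
def closedNbhd (G : SimpleGraph V) (C : Set V) : Set V :=
  C ∪ setNbhd G C

/-- `W` is `(q,k)`-unbreakable in the induced subgraph `G[U]`:
every separation `(A,B)` of `G[U]` of order at most `k` has
`|(A∖B) ∩ W| ≤ q` or `|(B∖A) ∩ W| ≤ q`. -/
def UnbreakableIn (G : SimpleGraph V) (U W : Set V) (q k : ℕ) : Prop :=
  ∀ A B : Set V, A ∪ B = U →
    (∀ a ∈ A \ B, ∀ b ∈ B \ A, ¬ G.Adj a b) →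
    (A ∩ B).ncard ≤ k →
    ((A \ B) ∩ W).ncard ≤ q ∨ ((B \ A) ∩ W).ncard ≤ q

/-- `W` is `(q,k)`-unbreakable in `G`. -/
def Unbreakable (G : SimpleGraph V) (W : Set V) (q k : ℕ) : Prop :=
  UnbreakableIn G Set.univ W q k

/-- `x` and `y` lie in the same connected component of `G − W`. -/
def ReachAvoid (G : SimpleGraph V) (W : Set V) (x y : V) : Prop :=
  ∃ (hx : x ∈ Wᶜ) (hy : y ∈ Wᶜ), (G.induce Wᶜ).Reachable ⟨x, hx⟩ ⟨y, hy⟩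

/-- `W` is an `X–Y` separator: no connected component of `G − W` contains
a vertex of `X∖W` and a vertex of `Y∖W`. -/
def IsSeparator (G : SimpleGraph V) (X Y W : Set V) : Prop :=
  ∀ x ∈ X \ W, ∀ y ∈ Y \ W, ¬ ReachAvoid G W x y

/-- `R_{G−W}(X∖W)`: the set of vertices reachable from `X∖W` in `G − W`. -/
def reachSet (G : SimpleGraph V) (W X : Set V) : Set V :=
  {y | ∃ x ∈ X \ W, ReachAvoid G W x y}

/-- `W` is an important `X–Y` separator. -/
def IsImportantSeparator (G : SimpleGraph V) (X Y W : Set V) : Prop :=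
  IsSeparator G X Y W ∧
  (∀ W' ⊆ W, IsSeparator G X Y W' → W' = W) ∧
  ∀ W' : Set V, IsSeparator G X Y W' → W'.ncard ≤ W.ncard →
    ¬ reachSet G W X ⊂ reachSet G W' X

/-- A chip (w.r.t. `G`, `k` and `S`): `G[C]` is connected, `|N_G(C)| ≤ 3k`,
and `N_G(C)` is an important `C–S` separator. -/
def IsChip (G : SimpleGraph V) (k : ℕ) (S C : Set V) : Prop :=
  (G.induce C).Connected ∧ (setNbhd G C).ncard ≤ 3 * k ∧
  IsImportantSeparator G C S (setNbhd G C)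

/-- The family of all inclusion-wise maximal chips. -/
def maximalChips (G : SimpleGraph V) (k : ℕ) (S : Set V) : Set (Set V) :=
  {C | IsChip G k S C ∧ ∀ C', IsChip G k S C' → C ⊆ C' → C' = C}

/-- Two vertex sets touch: they intersect or some edge joins them. -/
def Touches (G : SimpleGraph V) (C₁ C₂ : Set V) : Prop :=
  (C₁ ∩ C₂).Nonempty ∨ ∃ u ∈ C₁, ∃ v ∈ C₂, G.Adj u v

/-- `D` is a connected component of `G − A`: a maximal set disjoint from `A`
inducing a connected subgraph. -/
def IsCompOf (G : SimpleGraph V) (A D : Set V) : Prop :=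
  D ⊆ Aᶜ ∧ (G.induce D).Connected ∧
  ∀ D', D ⊆ D' → D' ⊆ Aᶜ → (G.induce D').Connected → D' = D

/-- The set `A = (⋂_{C ∈ 𝒞} V(G) ∖ N[C]) ∪ ⋃_{C ∈ 𝒞} N(C)` built from the
maximal chips (equals `V(G)` when there are no chips). -/
def chipBag (G : SimpleGraph V) (k : ℕ) (S : Set V) : Set V :=
  (⋂ C ∈ maximalChips G k S, (closedNbhd G C)ᶜ) ∪
    ⋃ C ∈ maximalChips G k S, setNbhd G C

/-- `η(k) = 3k·(3k·4^{3k}+1)`. -/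
def etaB (k : ℕ) : ℕ := 3 * k * (3 * k * 4 ^ (3 * k) + 1)

/-- `τ(k) = (3k)²·8^{3k} + 2k`. -/
def tauB (k : ℕ) : ℕ := (3 * k) ^ 2 * 8 ^ (3 * k) + 2 * k

/-- `τ′(k) = τ + (C(τ+k,2)·k + k)·k·η`. -/
def tauB' (k : ℕ) : ℕ :=
  tauB k + ((tauB k + k).choose 2 * k + k) * k * etaB k

/-- The tree graph determined by a parent function. -/
def parentGraph {T : Type*} (parent : T → T) : SimpleGraph T where
  Adj t s := t ≠ s ∧ (parent t = s ∨ parent s = t)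
  symm := ⟨fun t s h => ⟨h.1.symm, h.2.symm⟩⟩
  loopless := ⟨fun t h => h.1 rfl⟩

/-- The descendants of `t` (including `t` itself). -/
def descSet {T : Type*} (parent : T → T) (t : T) : Set T :=
  {u | ∃ n : ℕ, parent^[n] u = t}

/-- `γ(t) = ⋃_{u ⪯ t} β(u)`. -/
def gammaSet {T : Type*} (parent : T → T) (β : T → Set V) (t : T) : Set V :=
  ⋃ u ∈ descSet parent t, β u

/-- `σ(t) = ∅` for the root, `β(t) ∩ β(parent t)` otherwise. -/
def sigmaSet {T : Type*} [DecidableEq T] (root : T) (parent : T → T)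
    (β : T → Set V) (t : T) : Set V :=
  if t = root then ∅ else β t ∩ β (parent t)

/-- `(T,β)` (a rooted tree given by `root` and `parent`, with bags `β`)
is a tree decomposition of `G`. -/
structure IsTreeDecomp (G : SimpleGraph V) {T : Type*} (root : T) (parent : T → T)
    (β : T → Set V) : Prop where
  parent_root : parent root = root
  reaches_root : ∀ t : T, ∃ n : ℕ, parent^[n] t = root
  bags_connected : ∀ v : V, ((parentGraph parent).induce {t | v ∈ β t}).Connected
  edge_in_bag : ∀ u v : V, G.Adj u v → ∃ t : T, u ∈ β t ∧ v ∈ β t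

/-!
Induct on regions `R` whose neighbourhood `X = N(R)` lies in the current set `L` and has at
most `r` vertices, starting from `R = V ∖ L`, `r = |L|`. If the neighbourhood of some component
`D` of `G − L` inside `R` is broken by a separation `(A, B)` of order at most `k`, then
`N(D) ⊆ X`, so each of `X ∖ A` and `X ∖ B` has more than `2k` vertices. Add `S = R ∩ A ∩ B`
(at most `k` vertices) and recurse into `R ∩ (A ∖ B)` and `R ∩ (B ∖ A)`: their neighbourhoods
lie in `(X ∩ A) ∪ S` and `(X ∩ B) ∪ S`, so both are smaller than `r` and their sizes add up to
at most `r + 2k`, which is what lets the budget `(r - 2k - 1) · k` pay for `S` and both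
recursive calls. Every later component inside `R` avoids `A ∩ B`, so it lies on one side.
-/

open Set

def IsSeparation (G : SimpleGraph V) (A B : Set V) : Prop :=
  A ∪ B = univ ∧ ∀ a ∈ A \ B, ∀ b ∈ B \ A, ¬ G.Adj a b

def AdhesionsUnbreakable (G : SimpleGraph V) (k r : ℕ) (W R : Set V) : Prop :=
  ∀ D, IsCompOf G W D → D ⊆ R →
    (setNbhd G D).ncard ≤ r ∧ Unbreakable G (setNbhd G D) (2 * k) k

section

variable {G : SimpleGraph V}

theorem IsSeparation.symm {A B : Set V} (h : IsSeparation G A B) : IsSeparation G B A :=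
  ⟨union_comm A B ▸ h.1, fun b hb a ha hba => h.2 a ha b hb hba.symm⟩

theorem IsSeparation.mem_of_adj {A B : Set V} (h : IsSeparation G A B) {a v : V}
    (ha : a ∈ A \ B) (hav : G.Adj a v) : v ∈ A := by
  by_contra hvA
  have hvB : v ∈ B := (h.1 ▸ mem_univ v : v ∈ A ∪ B).resolve_left hvA
  exact h.2 a ha v ⟨hvB, hvA⟩ hav

theorem exists_separation_of_not_unbreakable {W : Set V} {q k : ℕ}
    (h : ¬ Unbreakable G W q k) :
    ∃ A B, IsSeparation G A B ∧ (A ∩ B).ncard ≤ k ∧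
      q < ((A \ B) ∩ W).ncard ∧ q < ((B \ A) ∩ W).ncard := by
  simp only [Unbreakable, UnbreakableIn, not_forall, not_or, not_le] at h
  obtain ⟨A, B, hAB, hsep, hord, hA, hB⟩ := h
  exact ⟨A, B, ⟨hAB, hsep⟩, hord, hA, hB⟩

theorem subset_of_induce_connected {D P : Set V} (hD : (G.induce D).Connected) {x : V}
    (hxD : x ∈ D) (hxP : x ∈ P) (hP : ∀ u ∈ D, ∀ v ∈ D, G.Adj u v → u ∈ P → v ∈ P) :
    D ⊆ P := by
  have walk_mem : ∀ {a b : D}, (G.induce D).Walk a b → (a : V) ∈ P → (b : V) ∈ P := by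
    intro a b w
    induction w with
    | nil => exact id
    | cons hadj _ ih => exact fun ha => ih (hP _ (Subtype.mem _) _ (Subtype.mem _) hadj ha)
  intro y hy
  obtain ⟨w⟩ := hD.preconnected ⟨x, hxD⟩ ⟨y, hy⟩
  exact walk_mem w hxP

theorem IsSeparation.subset_sdiff_or_subset_sdiff {A B D : Set V} (hsep : IsSeparation G A B)
    (hD : (G.induce D).Connected) (hDAB : Disjoint D (A ∩ B)) :
    D ⊆ A \ B ∨ D ⊆ B \ A := by
  have side : ∀ {A B : Set V}, IsSeparation G A B → Disjoint D (A ∩ B) →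
      ∀ u ∈ D, ∀ v ∈ D, G.Adj u v → u ∈ A \ B → v ∈ A \ B := by
    intro A B hsep hDAB u _ v hv huv hu
    have hvA := hsep.mem_of_adj hu huv
    exact ⟨hvA, fun hvB => Set.disjoint_left.mp hDAB hv ⟨hvA, hvB⟩⟩
  obtain ⟨⟨x, hx⟩⟩ := hD.nonempty
  have hxAB : x ∈ A \ B ∨ x ∈ B \ A := by
    have hx' : x ∈ A ∪ B := hsep.1 ▸ mem_univ x
    by_cases hxA : x ∈ A <;> by_cases hxB : x ∈ B <;> simp_all [Set.disjoint_left]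
  rcases hxAB with hxA | hxB
  · exact Or.inl (subset_of_induce_connected hD hx hxA (side hsep hDAB))
  · exact Or.inr (subset_of_induce_connected hD hx hxB (side hsep.symm (inter_comm A B ▸ hDAB)))

theorem IsCompOf.setNbhd_subset {A D : Set V} (hD : IsCompOf G A D) : setNbhd G D ⊆ A := by
  rintro v ⟨hvD, u, huD, huv⟩
  by_contra hvA
  have hconn : (G.induce (D ∪ {u, v})).Connected :=
    SimpleGraph.induce_union_connected hD.2.1.preconnected
      (SimpleGraph.induce_pair_connected_of_adj huv).preconnected ⟨u, huD, by simp⟩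
  have hsub : D ∪ {u, v} ⊆ Aᶜ := by
    rintro w (hw | rfl | rfl)
    exacts [hD.1 hw, hD.1 huD, hvA]
  have heq := hD.2.2 _ subset_union_left hsub hconn
  exact hvD (heq ▸ (by simp : v ∈ D ∪ {u, v}))

theorem IsCompOf.setNbhd_subset_setNbhd {L R D : Set V} (hD : IsCompOf G L D) (hDR : D ⊆ R)
    (hRL : Disjoint R L) : setNbhd G D ⊆ setNbhd G R := by
  intro v hv
  have hvL := hD.setNbhd_subset hv
  obtain ⟨-, u, huD, huv⟩ := hv
  exact ⟨fun hvR => Set.disjoint_left.mp hRL hvR hvL, u, hDR huD, huv⟩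

theorem IsCompOf.of_union_disjoint {M Z R D : Set V} (hD : IsCompOf G (M ∪ Z) D)
    (hDR : D ⊆ R) (hRM : setNbhd G R ⊆ M) (hZR : Disjoint Z R) : IsCompOf G M D := by
  obtain ⟨⟨x, hx⟩⟩ := hD.2.1.nonempty
  refine ⟨fun d hd hdM => hD.1 hd (Or.inl hdM), hD.2.1, fun D' hDD' hD'M hD' => ?_⟩
  have hD'R : D' ⊆ R := by
    refine subset_of_induce_connected hD' (hDD' hx) (hDR hx) fun u _ v hv huv huR => ?_
    by_contra hvR
    exact hD'M hv (hRM ⟨hvR, u, huR, huv⟩)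
  refine hD.2.2 D' hDD' (fun d hd hdMZ => ?_) hD'
  rcases hdMZ with hdM | hdZ
  exacts [hD'M hd hdM, Set.disjoint_left.mp hZR hdZ (hD'R hd)]

theorem IsSeparation.setNbhd_inter_sdiff_subset {A B : Set V} (hsep : IsSeparation G A B)
    (R : Set V) : setNbhd G (R ∩ (A \ B)) ⊆ (setNbhd G R ∩ A) ∪ R ∩ (A ∩ B) := by
  rintro v ⟨hv, u, ⟨huR, hu⟩, huv⟩
  have hvA := hsep.mem_of_adj hu huv
  by_cases hvR : v ∈ R
  · refine Or.inr ⟨hvR, hvA, ?_⟩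
    by_contra hvB
    exact hv ⟨hvR, hvA, hvB⟩
  · exact Or.inl ⟨⟨hvR, u, huR, huv⟩, hvA⟩

theorem IsSeparation.setNbhd_inter_sdiff_subset_union {A B L R : Set V}
    (hsep : IsSeparation G A B) (hNR : setNbhd G R ⊆ L) :
    setNbhd G (R ∩ (A \ B)) ⊆ L ∪ R ∩ (A ∩ B) :=
  (hsep.setNbhd_inter_sdiff_subset R).trans (union_subset_union_left _ fun _ hv => hNR hv.1)

theorem ncard_inter_add_ncard_inter_add_le [Finite V] {A B S X : Set V} (hAB : A ∪ B = univ)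
    (hS : S ⊆ A ∩ B) (hSX : Disjoint S X) :
    (X ∩ A).ncard + (X ∩ B).ncard + S.ncard ≤ X.ncard + (A ∩ B).ncard := by
  have hunion : (X ∩ A) ∪ (X ∩ B) = X := by rw [← inter_union_distrib_left, hAB, inter_univ]
  have hinter : (X ∩ A) ∩ (X ∩ B) = X ∩ (A ∩ B) := (inter_inter_distrib_left X A B).symm
  have hcover : (X ∩ (A ∩ B)).ncard + S.ncard ≤ (A ∩ B).ncard := by
    rw [← ncard_union_eq (Set.disjoint_left.mpr fun a ha haS => Set.disjoint_left.mp hSX haS ha.1)]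
    exact ncard_le_ncard (union_subset inter_subset_right hS)
  have := ncard_union_add_ncard_inter (X ∩ A) (X ∩ B)
  rw [hunion, hinter] at this
  omega

theorem AdhesionsUnbreakable.mono {k r r' : ℕ} {W R : Set V}
    (h : AdhesionsUnbreakable G k r W R) (hr : r ≤ r') : AdhesionsUnbreakable G k r' W R :=
  fun D hD hDR => (h D hD hDR).imp_left (·.trans hr)

theorem split_budget_le {k r a b s : ℕ} (hs : s ≤ k) (ha : a < r) (hb : b < r)
    (hab : a + b ≤ r + 2 * k) (hr : 4 * k + 2 ≤ r) :
    s + (a - 2 * k - 1) * k + (b - 2 * k - 1) * k ≤ (r - 2 * k - 1) * k :=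
  calc s + (a - 2 * k - 1) * k + (b - 2 * k - 1) * k
      ≤ (1 + (a - 2 * k - 1) + (b - 2 * k - 1)) * k := by nlinarith
    _ ≤ (r - 2 * k - 1) * k := Nat.mul_le_mul_right k (by omega)

theorem IsSeparation.ncard_setNbhd_sides [Finite V] {A B R : Set V} {k r : ℕ}
    (hsep : IsSeparation G A B) (hord : (A ∩ B).ncard ≤ k) (hr : (setNbhd G R).ncard ≤ r)
    (hA : 2 * k + 1 ≤ (setNbhd G R \ A).ncard) (hB : 2 * k + 1 ≤ (setNbhd G R \ B).ncard) :
    (setNbhd G (R ∩ (A \ B))).ncard < r ∧ (setNbhd G (R ∩ (B \ A))).ncard < r ∧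
      (R ∩ (A ∩ B)).ncard + ((setNbhd G (R ∩ (A \ B))).ncard - 2 * k - 1) * k +
        ((setNbhd G (R ∩ (B \ A))).ncard - 2 * k - 1) * k ≤ (r - 2 * k - 1) * k := by
  set X := setNbhd G R
  set S := R ∩ (A ∩ B)
  have hSX : Disjoint S X := Set.disjoint_left.mpr fun v hvS hvX => hvX.1 hvS.1
  have hS : S.ncard ≤ k := (ncard_le_ncard inter_subset_right).trans hord
  have hsplit : (X ∩ A).ncard + (X ∩ B).ncard + S.ncard ≤ X.ncard + (A ∩ B).ncard :=
    ncard_inter_add_ncard_inter_add_le hsep.1 inter_subset_right hSX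
  have hXA := ncard_inter_add_ncard_sdiff_eq_ncard X A
  have hXB := ncard_inter_add_ncard_sdiff_eq_ncard X B
  have hBA : (X \ B).ncard ≤ (X ∩ A).ncard :=
    ncard_le_ncard fun v hv => ⟨hv.1, (hsep.1 ▸ mem_univ v : v ∈ A ∪ B).resolve_right hv.2⟩
  have hNA : (setNbhd G (R ∩ (A \ B))).ncard ≤ (X ∩ A).ncard + S.ncard :=
    (ncard_le_ncard (hsep.setNbhd_inter_sdiff_subset R)).trans (ncard_union_le _ _)
  have hNB : (setNbhd G (R ∩ (B \ A))).ncard ≤ (X ∩ B).ncard + S.ncard := by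
    have hsub := hsep.symm.setNbhd_inter_sdiff_subset R
    rw [inter_comm B A] at hsub
    exact (ncard_le_ncard hsub).trans (ncard_union_le _ _)
  refine ⟨by omega, by omega, split_budget_le hS (by omega) (by omega) (by omega) (by omega)⟩

theorem IsSeparation.adhesionsUnbreakable_of_split {A B L R ZA ZB : Set V} {k r : ℕ}
    (hsep : IsSeparation G A B)
    (hZA : ZA ⊆ R ∩ (A \ B)) (hZB : ZB ⊆ R ∩ (B \ A))
    (hNA : setNbhd G (R ∩ (A \ B)) ⊆ L ∪ R ∩ (A ∩ B))
    (hNB : setNbhd G (R ∩ (B \ A)) ⊆ L ∪ R ∩ (A ∩ B))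
    (hA : AdhesionsUnbreakable G k r (L ∪ R ∩ (A ∩ B) ∪ ZA) (R ∩ (A \ B)))
    (hB : AdhesionsUnbreakable G k r (L ∪ R ∩ (A ∩ B) ∪ ZB) (R ∩ (B \ A))) :
    AdhesionsUnbreakable G k r (L ∪ (R ∩ (A ∩ B) ∪ ZA ∪ ZB)) R := by
  intro D hD hDR
  have hDAB : Disjoint D (A ∩ B) :=
    Set.disjoint_left.mpr fun d hd hdAB => hD.1 hd (Or.inr (Or.inl (Or.inl ⟨hDR hd, hdAB⟩)))
  have hsides : Disjoint (R ∩ (A \ B)) (R ∩ (B \ A)) :=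
    disjoint_sdiff_sdiff.mono inter_subset_right inter_subset_right
  rcases hsep.subset_sdiff_or_subset_sdiff hD.2.1 hDAB with hDA | hDB
  · have hW : L ∪ (R ∩ (A ∩ B) ∪ ZA ∪ ZB) = L ∪ R ∩ (A ∩ B) ∪ ZA ∪ ZB := by
      simp only [union_assoc]
    rw [hW] at hD
    exact hA D (hD.of_union_disjoint (subset_inter hDR hDA) (hNA.trans subset_union_left)
      (hsides.symm.mono_left hZB)) (subset_inter hDR hDA)
  · have hW : L ∪ (R ∩ (A ∩ B) ∪ ZA ∪ ZB) = L ∪ R ∩ (A ∩ B) ∪ ZB ∪ ZA := by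
      rw [union_right_comm _ ZA ZB]; simp only [union_assoc]
    rw [hW] at hD
    exact hB D (hD.of_union_disjoint (subset_inter hDR hDB) (hNB.trans subset_union_left)
      (hsides.mono_left hZA)) (subset_inter hDR hDB)

theorem exists_adhesionsUnbreakable [Finite V] (k r : ℕ) (L R : Set V) (hRL : Disjoint R L)
    (hNR : setNbhd G R ⊆ L) (hr : (setNbhd G R).ncard ≤ r) :
    ∃ Z ⊆ R, Z.ncard ≤ (r - 2 * k - 1) * k ∧ AdhesionsUnbreakable G k r (L ∪ Z) R := by
  induction r using Nat.strong_induction_on generalizing L R with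
  | _ r ih =>
  by_cases hgood : ∀ D, IsCompOf G L D → D ⊆ R → Unbreakable G (setNbhd G D) (2 * k) k
  · refine ⟨∅, empty_subset R, by simp, fun D hD hDR => ?_⟩
    rw [union_empty] at hD
    exact ⟨(ncard_le_ncard (hD.setNbhd_subset_setNbhd hDR hRL)).trans hr, hgood D hD hDR⟩
  push Not at hgood
  obtain ⟨D₀, hD₀, hD₀R, hbreak⟩ := hgood
  obtain ⟨A, B, hsep, hord, hA, hB⟩ := exists_separation_of_not_unbreakable hbreak
  have hD₀X := hD₀.setNbhd_subset_setNbhd hD₀R hRL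
  have hXB : 2 * k + 1 ≤ (setNbhd G R \ B).ncard :=
    hA.trans_le (ncard_le_ncard fun v (hv : v ∈ (A \ B) ∩ setNbhd G D₀) => ⟨hD₀X hv.2, hv.1.2⟩)
  have hXA : 2 * k + 1 ≤ (setNbhd G R \ A).ncard :=
    hB.trans_le (ncard_le_ncard fun v (hv : v ∈ (B \ A) ∩ setNbhd G D₀) => ⟨hD₀X hv.2, hv.1.2⟩)
  obtain ⟨hrA, hrB, hbudget⟩ := hsep.ncard_setNbhd_sides hord hr hXA hXB
  set S := R ∩ (A ∩ B)
  have hNA : setNbhd G (R ∩ (A \ B)) ⊆ L ∪ S := hsep.setNbhd_inter_sdiff_subset_union hNR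
  have hNB : setNbhd G (R ∩ (B \ A)) ⊆ L ∪ S := by
    simpa only [inter_comm B A] using hsep.symm.setNbhd_inter_sdiff_subset_union hNR
  have hdisjA : Disjoint (R ∩ (A \ B)) (L ∪ S) := disjoint_union_right.mpr
    ⟨hRL.mono_left inter_subset_left, Set.disjoint_left.mpr fun v hv hvS => hv.2.2 hvS.2.2⟩
  have hdisjB : Disjoint (R ∩ (B \ A)) (L ∪ S) := disjoint_union_right.mpr
    ⟨hRL.mono_left inter_subset_left, Set.disjoint_left.mpr fun v hv hvS => hv.2.2 hvS.2.1⟩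
  obtain ⟨ZA, hZA, hZAcard, hZAgood⟩ := ih _ hrA (L ∪ S) (R ∩ (A \ B)) hdisjA hNA le_rfl
  obtain ⟨ZB, hZB, hZBcard, hZBgood⟩ := ih _ hrB (L ∪ S) (R ∩ (B \ A)) hdisjB hNB le_rfl
  refine ⟨S ∪ ZA ∪ ZB, union_subset (union_subset inter_subset_left
    (hZA.trans inter_subset_left)) (hZB.trans inter_subset_left), ?_,
    hsep.adhesionsUnbreakable_of_split hZA hZB hNA hNB (hZAgood.mono hrA.le) (hZBgood.mono hrB.le)⟩
  calc (S ∪ ZA ∪ ZB).ncard ≤ S.ncard + ZA.ncard + ZB.ncard :=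
        (ncard_union_le _ _).trans (Nat.add_le_add_right (ncard_union_le _ _) _)
    _ ≤ _ := by gcongr
    _ ≤ _ := hbudget

end

theorem strengthen_neighbourhoods_general {V : Type*} [Fintype V]
    (G : SimpleGraph V) (k : ℕ) (L : Set V) :
    ∃ L' : Set V, L ⊆ L' ∧
      (L' \ L).ncard ≤ (L.ncard - 2 * k - 1) * k ∧
      ∀ D : Set V, IsCompOf G L' D →
        (setNbhd G D).ncard ≤ L.ncard ∧
        Unbreakable G (setNbhd G D) (2 * k) k := by
  have hNL : setNbhd G Lᶜ ⊆ L := fun v hv => notMem_compl_iff.mp hv.1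
  obtain ⟨Z, -, hZcard, hZ⟩ :=
    exists_adhesionsUnbreakable k L.ncard L Lᶜ disjoint_compl_left hNL (ncard_le_ncard hNL)
  refine ⟨L ∪ Z, subset_union_left, ?_, fun D hD => hZ D hD fun d hd hdL => hD.1 hd (Or.inl hdL)⟩
  calc ((L ∪ Z) \ L).ncard ≤ Z.ncard := ncard_le_ncard (union_sdiff_left.trans_subset sdiff_subset)
    _ ≤ _ := hZcard

/-- strengthening unbreakability of adhesions
(Lemma `breaking-neighbourhood`). -/
theorem strengthen_neighbourhoods {V : Type*} [Fintype V] [DecidableEq V]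
    (G : SimpleGraph V) (k : ℕ) (hk : 0 < k) (L : Set V)
    (hL : 2 * k + 1 ≤ L.ncard) :
    ∃ L' : Set V, L ⊆ L' ∧
      (L' \ L).ncard ≤ (L.ncard - 2 * k - 1) * k ∧
      ∀ D : Set V, IsCompOf G L' D →
        (setNbhd G D).ncard ≤ L.ncard ∧
        Unbreakable G (setNbhd G D) (2 * k) k :=
  strengthen_neighbourhoods_general G k L
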